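/- arXiv:1409.8045 — 2 statements merged into one kernel-verified Lean document; each statement's English description precedes it below -/
import Mathlib

section
/- The set R_w = w · r_w^{-1}(N_0(k_F)) equals the set of matrices (a_{ij}) ∈ GL_n(F) such that a_{ij} = 1 if w^{-1}(i) = j, a_{ij} = 0 if w^{-1}(i) < j, a_{ij} ∈ o_F if w^{-1}(i) > j and w(j) > i, and a_{ij} ∈ π_F o_F if w^{-1}(i) > j and w(j) < i. -/
open Matrix

variable (p : ℕ) [Fact p.Prime] (F : Type) [Field F] [Algebra ℚ_[p] F]
  [FiniteDimensional ℚ_[p] F] [Algebra ℤ_[p] F] [IsScalarTower ℤ_[p] ℚ_[p] F]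

/-- The ring of integers `o_F` of the finite extension `F` of `ℚ_p`. -/
def oF : Set F := {x | x ∈ integralClosure ℤ_[p] F}

/-- The ideal `π_F o_F` of `o_F`, as a subset of `F`. -/
def piO (π : F) : Set F := {x | ∃ c ∈ oF p F, x = π * c}

/-- The permutation matrix of `w`, with `w_{ij} = 1` iff `w(j) = i`. -/
def permMat (n : ℕ) (w : Equiv.Perm (Fin n)) : Matrix (Fin n) (Fin n) F :=
  fun i j => if w j = i then 1 else 0

/-- `R_w`: the set of matrices `(a_{ij})` with `a_{ij} = 1` if `w⁻¹(i) = j`,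
`a_{ij} = 0` if `w⁻¹(i) < j`, `a_{ij} ∈ o_F` if `w⁻¹(i) > j` and `w(j) > i`, and
`a_{ij} ∈ π_F o_F` if `w⁻¹(i) > j` and `w(j) < i`. -/
def Rw (π : F) (n : ℕ) (w : Equiv.Perm (Fin n)) : Set (Matrix (Fin n) (Fin n) F) :=
  {a | ∀ i j : Fin n,
    (w⁻¹ i = j → a i j = 1) ∧
    (w⁻¹ i < j → a i j = 0) ∧
    (j < w⁻¹ i → i < w j → a i j ∈ oF p F) ∧
    (j < w⁻¹ i → w j < i → a i j ∈ piO p F π)}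

/-- invertible upper triangular matrix (an element of the Borel `B`). -/
def IsBorel {n : ℕ} (b : Matrix (Fin n) (Fin n) F) : Prop :=
  (∀ i j : Fin n, j < i → b i j = 0) ∧ (∀ i : Fin n, b i i ≠ 0)

/-! Left multiplication by `w` moves row `w⁻¹ i` of `m` to row `i`, and conjugation by `w` sends
the entry `(i, j)` of `m` to position `(w i, w j)`. After reindexing the rows of `a = w m` by `w`,
membership in `R_w` therefore says exactly that `m` is lower unitriangular, with entries in
`π_F o_F` wherever `w j < w i`, and in `o_F` elsewhere; integrality of the former entries comes
from `π_F ∈ o_F`. -/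

section PermMat

variable {F} {n : ℕ}

@[simp]
lemma permMat_mul_apply (σ : Equiv.Perm (Fin n)) (m : Matrix (Fin n) (Fin n) F) (i j : Fin n) :
    (permMat F n σ * m) i j = m (σ⁻¹ i) j := by
  simp [Matrix.mul_apply, permMat, ← Equiv.eq_symm_apply, Equiv.Perm.inv_def]

@[simp]
lemma mul_permMat_apply (σ : Equiv.Perm (Fin n)) (m : Matrix (Fin n) (Fin n) F) (i j : Fin n) :
    (m * permMat F n σ) i j = m i (σ j) := by
  simp [Matrix.mul_apply, permMat]

lemma forall_lt_imp_permMat_conj_mem_iff (w : Equiv.Perm (Fin n))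
    (m : Matrix (Fin n) (Fin n) F) (S : Set F) :
    (∀ i j, j < i → (permMat F n w * m * permMat F n w⁻¹) i j ∈ S) ↔
      ∀ i j, w j < w i → m i j ∈ S := by
  constructor
  · intro h i j hij
    simpa using h (w i) (w j) hij
  · intro h i j hij
    simpa using h (w⁻¹ i) (w⁻¹ j) (by simpa using hij)

end PermMat

section IntegralEntries

variable {p : ℕ} [Fact p.Prime] {F : Type} [Field F] [Algebra ℤ_[p] F]

lemma zero_mem_oF : (0 : F) ∈ oF p F := (integralClosure ℤ_[p] F).zero_mem

lemma one_mem_oF : (1 : F) ∈ oF p F := (integralClosure ℤ_[p] F).one_mem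

lemma zero_mem_piO (π : F) : (0 : F) ∈ piO p F π := ⟨0, zero_mem_oF, (mul_zero π).symm⟩

variable {π : F} {n : ℕ} {w : Equiv.Perm (Fin n)}

lemma piO_subset_oF (hπ : π ∈ oF p F) : piO p F π ⊆ oF p F := by
  rintro _ ⟨c, hc, rfl⟩
  exact (integralClosure ℤ_[p] F).mul_mem hπ hc

lemma mem_Rw_iff {a : Matrix (Fin n) (Fin n) F} :
    a ∈ Rw p F π n w ↔ ∀ i j : Fin n,
      (i = j → a (w i) j = 1) ∧
      (i < j → a (w i) j = 0) ∧
      (j < i → w i < w j → a (w i) j ∈ oF p F) ∧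
      (j < i → w j < w i → a (w i) j ∈ piO p F π) := by
  simp only [Rw, Set.mem_ofPred_eq]
  rw [← w.forall_congr_right]
  simp

lemma permMat_mul_mem_Rw {m : Matrix (Fin n) (Fin n) F} (hdiag : ∀ i, m i i = 1)
    (hupper : ∀ i j, i < j → m i j = 0) (hint : ∀ i j, m i j ∈ oF p F)
    (hpi : ∀ i j, w j < w i → m i j ∈ piO p F π) :
    permMat F n w * m ∈ Rw p F π n w := by
  refine mem_Rw_iff.mpr fun i j => ?_
  simp only [permMat_mul_apply, Equiv.Perm.coe_inv, Equiv.symm_apply_apply]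
  exact ⟨fun h => h ▸ hdiag i, hupper i j, fun _ _ => hint i j, fun _ h => hpi i j h⟩

lemma apply_mem_piO_of_mem_Rw {a : Matrix (Fin n) (Fin n) F} (ha : a ∈ Rw p F π n w)
    {i j : Fin n} (h : w j < w i) : a (w i) j ∈ piO p F π := by
  have hRw := mem_Rw_iff.mp ha i j
  rcases lt_trichotomy i j with hij | rfl | hji
  · rw [hRw.2.1 hij]
    exact zero_mem_piO π
  · exact (lt_irrefl _ h).elim
  · exact hRw.2.2.2 hji h

lemma apply_mem_oF_of_mem_Rw (hπ : π ∈ oF p F) {a : Matrix (Fin n) (Fin n) F}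
    (ha : a ∈ Rw p F π n w) (i j : Fin n) : a (w i) j ∈ oF p F := by
  have hRw := mem_Rw_iff.mp ha i j
  rcases lt_trichotomy (w i) (w j) with h | h | h
  · rcases lt_trichotomy i j with hij | rfl | hji
    · rw [hRw.2.1 hij]
      exact zero_mem_oF
    · exact (lt_irrefl _ h).elim
    · exact hRw.2.2.1 hji h
  · rw [hRw.1 (w.injective h)]
    exact one_mem_oF
  · exact piO_subset_oF hπ (apply_mem_piO_of_mem_Rw ha h)

end IntegralEntries

/-- `r_w⁻¹(N₀(k_F))` is encoded as the lower unitriangular matrices `m` over `o_F` such that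
the below-diagonal entries of `w m w⁻¹` lie in `π_F o_F`, i.e. `w m w⁻¹` reduces mod `π_F`
into `N₀(k_F)`. -/
theorem stmt8 (n : ℕ) (π : F) (hπ : π ∈ oF p F)
    (w : Equiv.Perm (Fin n)) :
    {a : Matrix (Fin n) (Fin n) F | ∃ m : Matrix (Fin n) (Fin n) F,
        (∀ i : Fin n, m i i = 1) ∧ (∀ i j : Fin n, i < j → m i j = 0) ∧
        (∀ i j : Fin n, m i j ∈ oF p F) ∧
        (∀ i j : Fin n, j < i →
          (permMat F n w * m * permMat F n w⁻¹) i j ∈ piO p F π) ∧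
        a = permMat F n w * m}
      = Rw p F π n w := by
  ext a
  constructor
  · rintro ⟨m, hdiag, hupper, hint, hconj, rfl⟩
    rw [forall_lt_imp_permMat_conj_mem_iff] at hconj
    exact permMat_mul_mem_Rw hdiag hupper hint hconj
  · intro ha
    have hRw := mem_Rw_iff.mp ha
    refine ⟨permMat F n w⁻¹ * a, fun i => ?_, fun i j hij => ?_, fun i j => ?_, ?_, ?_⟩
    · simpa using (hRw i i).1 rfl
    · simpa using (hRw i j).2.1 hij
    · simpa using apply_mem_oF_of_mem_Rw hπ ha i j
    · rw [forall_lt_imp_permMat_conj_mem_iff]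
      intro i j h
      simpa using apply_mem_piO_of_mem_Rw ha h
    · ext i j
      simp
end

section
/- A set of double coset representatives of U^{(1)} \ GL_n(F) / B is given by the union over w ∈ S_n of the sets Ñ_w(k_F) · w, where Ñ_w(k_F) denotes the Teichmüller-style lift to N_0 of the k_F-points of N_w; i.e., GL_n(F) is the disjoint union over these representatives r of the double cosets U^{(1)} r B. -/
set_option linter.unusedSectionVars false
set_option linter.unusedVariables false
set_option maxHeartbeats 1000000
open Matrix

variable (p : ℕ) [Fact p.Prime] (F : Type) [Field F] [Algebra ℚ_[p] F]
  [FiniteDimensional ℚ_[p] F] [Algebra ℤ_[p] F] [IsScalarTower ℤ_[p] ℚ_[p] F]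

/-- `U⁽¹⁾ = ker(GL_n(o_F) → GL_n(k_F))`: integral matrices congruent to `1` mod `π_F`. -/
def IsU1 {n : ℕ} (π : F) (g : GL (Fin n) F) : Prop :=
  (∀ i j : Fin n, (↑g : Matrix (Fin n) (Fin n) F) i j ∈ oF p F) ∧
  (∀ i j : Fin n, (↑g⁻¹ : Matrix (Fin n) (Fin n) F) i j ∈ oF p F) ∧
  (∀ i j : Fin n, ((↑g : Matrix (Fin n) (Fin n) F) - 1) i j ∈ piO p F π)

/-- `Ñ_w(k_F)`: upper triangular unipotent matrices in `N_w ∩ N₀` whose free entries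
(those at places `(i,j)`, `i < j`, with `w⁻¹(j) < w⁻¹(i)`) lie in the set `S` of
Teichmüller (multiplicative) lifts of the residue field `k_F`. -/
def NwTilde (n : ℕ) (S : Set F) (w : Equiv.Perm (Fin n)) :
    Set (Matrix (Fin n) (Fin n) F) :=
  {m | (∀ i : Fin n, m i i = 1) ∧ (∀ i j : Fin n, j < i → m i j = 0) ∧
    (∀ i j : Fin n, i < j → w⁻¹ i < w⁻¹ j → m i j = 0) ∧
    (∀ i j : Fin n, i < j → w⁻¹ j < w⁻¹ i → m i j ∈ S)}

namespace Stmt9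
open Finset
variable {K : Type} [Field K]

/-- All the abstract data we need about the valuation ring `O`, its maximal
ideal `Mm`, and the set of residue representatives `S`. -/
structure Dat (O Mm S : Set K) : Prop where
  Ozero : (0:K) ∈ O
  Oone : (1:K) ∈ O
  Oadd : ∀ a ∈ O, ∀ b ∈ O, a + b ∈ O
  Oneg : ∀ a ∈ O, -a ∈ O
  Omul : ∀ a ∈ O, ∀ b ∈ O, a * b ∈ O
  Mzero : (0:K) ∈ Mm
  Madd : ∀ a ∈ Mm, ∀ b ∈ Mm, a + b ∈ Mm
  Mneg : ∀ a ∈ Mm, -a ∈ Mm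
  MmulO : ∀ a ∈ Mm, ∀ b ∈ O, a * b ∈ Mm
  MsubO : Mm ⊆ O
  Mone : (1:K) ∉ Mm
  total : ∀ x y : K, x ≠ 0 → y ≠ 0 → x * y⁻¹ ∈ O ∨ y * x⁻¹ ∈ O
  unitM : ∀ x ∈ O, x ∈ Mm ∨ (x ≠ 0 ∧ x⁻¹ ∈ O)
  S0 : (0:K) ∈ S
  S1 : (1:K) ∈ S
  Ssub : S ⊆ O
  Srep : ∀ x ∈ O, ∃ s ∈ S, x - s ∈ Mm
  Suniq : ∀ s ∈ S, ∀ s' ∈ S, s - s' ∈ Mm → s = s'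

variable {O Mm S : Set K} (h : Dat O Mm S)

lemma Dat.OmulM (h : Dat O Mm S) {a b : K} (ha : a ∈ O) (hb : b ∈ Mm) : a * b ∈ Mm := by
  rw [mul_comm]; exact h.MmulO b hb a ha

lemma Dat.Osub (h : Dat O Mm S) {a b : K} (ha : a ∈ O) (hb : b ∈ O) : a - b ∈ O := by
  rw [sub_eq_add_neg]; exact h.Oadd a ha _ (h.Oneg b hb)

lemma Dat.Msub (h : Dat O Mm S) {a b : K} (ha : a ∈ Mm) (hb : b ∈ Mm) : a - b ∈ Mm := by
  rw [sub_eq_add_neg]; exact h.Madd a ha _ (h.Mneg b hb)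

lemma Dat.OsumF (h : Dat O Mm S) {A : Type} (s : Finset A) (f : A → K)
    (hf : ∀ a ∈ s, f a ∈ O) : (∑ a ∈ s, f a) ∈ O := by
  classical
  induction s using Finset.induction with
  | empty => simpa using h.Ozero
  | insert _ _ hnot ih =>
    rename_i a s
    rw [Finset.sum_insert hnot]
    exact h.Oadd _ (hf a (Finset.mem_insert_self a s)) _
      (ih fun b hb => hf b (Finset.mem_insert_of_mem hb))

lemma Dat.MsumF (h : Dat O Mm S) {A : Type} (s : Finset A) (f : A → K)
    (hf : ∀ a ∈ s, f a ∈ Mm) : (∑ a ∈ s, f a) ∈ Mm := by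
  classical
  induction s using Finset.induction with
  | empty => simpa using h.Mzero
  | insert _ _ hnot ih =>
    rename_i a s
    rw [Finset.sum_insert hnot]
    exact h.Madd _ (hf a (Finset.mem_insert_self a s)) _
      (ih fun b hb => hf b (Finset.mem_insert_of_mem hb))

/-- the unique `S`-representative of `x ∈ Mm` is `0`. -/
lemma Dat.repM (h : Dat O Mm S) {x s : K} (hx : x ∈ Mm) (hs : s ∈ S) (hxs : x - s ∈ Mm) :
    s = 0 := by
  have : s - 0 ∈ Mm := by
    have := h.Msub hx hxs
    simpa using this
  exact h.Suniq s hs 0 h.S0 this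


lemma sum_split {A : Type} [Fintype A] [DecidableEq A] (a : A) (f : A → K) :
    ∑ x, f x = f a + ∑ x : {y // y ≠ a}, f x.1 := by
  rw [← Finset.add_sum_erase _ f (Finset.mem_univ a)]
  congr 1
  exact Finset.sum_subtype _ (fun x => by simp) _

section Mats
variable {R C : Type} [Fintype R] [LinearOrder R] [Fintype C] [LinearOrder C]
  [DecidableEq R] [DecidableEq C]

/-- generalized permutation matrix -/
def pmat (w : C ≃ R) : Matrix R C K := fun i j => if w j = i then 1 else 0

/-- transposed generalized permutation matrix -/
def pmatT (w : C ≃ R) : Matrix C R K := fun j i => if w j = i then 1 else 0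

lemma mul_pmat (N : Matrix R R K) (w : C ≃ R) (i : R) (j : C) :
    (N * (pmat w : Matrix R C K)) i j = N i (w j) := by
  simp only [Matrix.mul_apply, pmat, mul_ite, mul_one, mul_zero]
  rw [Finset.sum_ite_eq univ (w j) (fun k => N i k)]
  simp

lemma pmat_mul_pmatT (w : C ≃ R) : (pmat w : Matrix R C K) * (pmatT w : Matrix C R K) = 1 := by
  ext i i'
  simp only [Matrix.mul_apply, pmat, pmatT, ite_mul, one_mul, zero_mul]
  rw [Finset.sum_eq_single (w.symm i)]
  · simp [Matrix.one_apply, eq_comm]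
  · intro b _ hb
    rw [if_neg]
    intro hc
    exact hb (by rw [← hc]; simp)
  · simp

lemma pmatT_mul_pmat (w : C ≃ R) : (pmatT w : Matrix C R K) * (pmat w : Matrix R C K) = 1 := by
  ext j j'
  simp only [Matrix.mul_apply, pmat, pmatT, ite_mul, one_mul, zero_mul]
  rw [Finset.sum_eq_single (w j)]
  · by_cases hjj : j = j'
    · subst hjj; simp [Matrix.one_apply]
    · rw [Matrix.one_apply_ne hjj, if_pos rfl, if_neg (fun hc => hjj ((w.injective hc).symm))]
  · intro b _ hb
    rw [if_neg (fun hc => hb hc.symm)]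
  · simp

/-- upper triangular -/
def Tri (b : Matrix C C K) : Prop := ∀ j j' : C, j' < j → b j j' = 0

/-- Borel: invertible upper triangular -/
def BorelG (b : Matrix C C K) : Prop := Tri b ∧ ∀ j, b j j ≠ 0

lemma Tri.mul_apply_diag {P Q : Matrix C C K} (hP : Tri P) (hQ : Tri Q) (j : C) :
    (P * Q) j j = P j j * Q j j := by
  rw [Matrix.mul_apply, Finset.sum_eq_single j]
  · intro b _ hb
    rcases lt_or_gt_of_ne hb with hlt | hgt
    · rw [hP _ _ hlt, zero_mul]
    · rw [hQ _ _ hgt, mul_zero]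
  · simp

lemma Tri.mul {P Q : Matrix C C K} (hP : Tri P) (hQ : Tri Q) : Tri (P * Q) := by
  intro j j' hjj
  rw [Matrix.mul_apply]
  apply Finset.sum_eq_zero
  intro k _
  by_cases hk : k < j
  · rw [hP _ _ hk, zero_mul]
  · rw [hQ _ _ (lt_of_lt_of_le hjj (not_lt.1 hk)), mul_zero]

lemma BorelG.mul {P Q : Matrix C C K} (hP : BorelG P) (hQ : BorelG Q) : BorelG (P * Q) :=
  ⟨hP.1.mul hQ.1, fun j => by
    rw [hP.1.mul_apply_diag hQ.1]
    exact mul_ne_zero (hP.2 j) (hQ.2 j)⟩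

/-- `U⁽¹⁾` as a condition on a pair of mutually inverse matrices -/
structure U1G (O Mm : Set K) (u uinv : Matrix R R K) : Prop where
  uO : ∀ i k, u i k ∈ O
  uinvO : ∀ i k, uinv i k ∈ O
  mul_inv : u * uinv = 1
  inv_mul : uinv * u = 1
  uM : ∀ i k, u i k - (1 : Matrix R R K) i k ∈ Mm
  uinvM : ∀ i k, uinv i k - (1 : Matrix R R K) i k ∈ Mm

/-- normal form `Ñ_w(k)`-condition, generalized -/
def NFG (S : Set K) (w : C ≃ R) (N : Matrix R R K) : Prop :=
  (∀ i, N i i = 1) ∧ (∀ i k, k < i → N i k = 0) ∧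
  (∀ i k, i < k → w.symm i < w.symm k → N i k = 0) ∧
  (∀ i k, i < k → w.symm k < w.symm i → N i k ∈ S)

lemma NFG.entries (h : Dat O Mm S) {w : C ≃ R} {N : Matrix R R K} (hN : NFG S w N)
    (i k : R) : N i k ∈ O := by
  rcases lt_trichotomy i k with hik | hik | hik
  · rcases lt_trichotomy (w.symm i) (w.symm k) with hw | hw | hw
    · rw [hN.2.2.1 i k hik hw]; exact h.Ozero
    · exact absurd (w.symm.injective hw) (ne_of_lt hik)
    · exact h.Ssub (hN.2.2.2 i k hik hw)
  · rw [hik, hN.1]; exact h.Oone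
  · rw [hN.2.1 i k hik]; exact h.Ozero


lemma NFG.entries_S {w : C ≃ R} {N : Matrix R R K} (hN : NFG S w N)
    (hS0 : (0:K) ∈ S) (hS1 : (1:K) ∈ S) (i k : R) : N i k ∈ S := by
  rcases lt_trichotomy i k with hik | hik | hik
  · rcases lt_trichotomy (w.symm i) (w.symm k) with hw | hw | hw
    · rw [hN.2.2.1 i k hik hw]; exact hS0
    · exact absurd (w.symm.injective hw) (ne_of_lt hik)
    · exact hN.2.2.2 i k hik hw
  · rw [hik, hN.1]; exact hS1
  · rw [hN.2.1 i k hik]; exact hS0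

lemma NFG.right_of_pivot {w : C ≃ R} {N : Matrix R R K} (hN : NFG S w N)
    {j k : C} (hjk : j < k) : N (w j) (w k) = 0 := by
  rcases lt_trichotomy (w j) (w k) with hlt | heq | hgt
  · exact hN.2.2.1 _ _ hlt (by simpa using hjk)
  · exact absurd (w.injective heq) (ne_of_lt hjk)
  · exact hN.2.1 _ _ hgt

lemma NFG.below_pivot {w : C ≃ R} {N : Matrix R R K} (hN : NFG S w N)
    {i : R} {j : C} (hij : w j < i) : N i (w j) = 0 := hN.2.1 _ _ hij

end Mats

/-- The core (residue-field level) uniqueness: two congruent normal forms modulo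
upper-triangular column operations have the same `w` and congruent entries. -/
lemma coreUnique {n : ℕ} (h : Dat O Mm S) {w₁ w₂ : Fin n ≃ Fin n}
    {N₁ N₂ : Matrix (Fin n) (Fin n) K} (hN₁ : NFG S w₁ N₁) (hN₂ : NFG S w₂ N₂)
    {b : Matrix (Fin n) (Fin n) K} (hbT : Tri b) (hbO : ∀ k j, b k j ∈ O)
    (cong : ∀ i j, N₁ i (w₁ j) - ∑ k, N₂ i (w₂ k) * b k j ∈ Mm) :
    ∀ j : Fin n, w₁ j = w₂ j ∧ ∀ i, N₁ i (w₁ j) - N₂ i (w₂ j) ∈ Mm := by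
  suffices key : ∀ j : Fin n,
      (∀ j', j' < j → w₁ j' = w₂ j' ∧ ∀ i, N₁ i (w₁ j') - N₂ i (w₂ j') ∈ Mm) →
      (w₁ j = w₂ j ∧ ∀ i, N₁ i (w₁ j) - N₂ i (w₂ j) ∈ Mm) by
    have main : ∀ (t : ℕ) (j : Fin n), (j : ℕ) = t →
        (w₁ j = w₂ j ∧ ∀ i, N₁ i (w₁ j) - N₂ i (w₂ j) ∈ Mm) := by
      intro t
      induction t using Nat.strong_induction_on with
      | _ t ih =>
        intro j hj
        exact key j (fun j' hj' => ih j'.val (hj ▸ hj') j' rfl)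
    exact fun j => main j.val j rfl
  intro j IH
  -- (a) earlier entries of column j of b lie in Mm
  have hb : ∀ j' : Fin n, j' < j → b j' j ∈ Mm := by
    suffices hbs : ∀ (t : ℕ) (j' : Fin n), (j' : ℕ) = t → j' < j → b j' j ∈ Mm by
      exact fun j' h' => hbs j'.val j' rfl h'
    intro t
    induction t using Nat.strong_induction_on with
    | _ t iht =>
      intro j' hval hlt
      have hcong := cong (w₁ j') j
      rw [hN₁.right_of_pivot hlt, zero_sub, (IH j' hlt).1] at hcong
      have hsplit : ∑ k, N₂ (w₂ j') (w₂ k) * b k j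
          = N₂ (w₂ j') (w₂ j') * b j' j + ∑ k ∈ univ.erase j', N₂ (w₂ j') (w₂ k) * b k j :=
        (Finset.add_sum_erase _ _ (mem_univ j')).symm
      have hrest : (∑ k ∈ univ.erase j', N₂ (w₂ j') (w₂ k) * b k j) ∈ Mm := by
        apply h.MsumF
        intro k hk
        rcases lt_or_gt_of_ne (Finset.ne_of_mem_erase hk) with hk1 | hk1
        · exact h.OmulM (hN₂.entries h _ _) (iht k.val (hval ▸ hk1) k rfl (hk1.trans hlt))
        · rw [hN₂.right_of_pivot hk1, zero_mul]; exact h.Mzero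
      have hsum : (∑ k, N₂ (w₂ j') (w₂ k) * b k j) ∈ Mm := by
        have := h.Mneg _ hcong
        simpa using this
      have : b j' j = (∑ k, N₂ (w₂ j') (w₂ k) * b k j)
          - ∑ k ∈ univ.erase j', N₂ (w₂ j') (w₂ k) * b k j := by
        rw [hsplit, hN₂.1]; ring
      rw [this]
      exact h.Msub hsum hrest
  -- (b)
  have hbB : ∀ i, N₁ i (w₁ j) - b j j * N₂ i (w₂ j) ∈ Mm := by
    intro i
    have hcong := cong i j
    have hsplit : ∑ k, N₂ i (w₂ k) * b k j
        = N₂ i (w₂ j) * b j j + ∑ k ∈ univ.erase j, N₂ i (w₂ k) * b k j :=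
      (Finset.add_sum_erase _ _ (mem_univ j)).symm
    have hrest : (∑ k ∈ univ.erase j, N₂ i (w₂ k) * b k j) ∈ Mm := by
      apply h.MsumF
      intro k hk
      rcases lt_or_gt_of_ne (Finset.ne_of_mem_erase hk) with hk1 | hk1
      · exact h.OmulM (hN₂.entries h _ _) (hb k hk1)
      · rw [hbT k j hk1, mul_zero]; exact h.Mzero
    have heq : N₁ i (w₁ j) - b j j * N₂ i (w₂ j)
        = (N₁ i (w₁ j) - ∑ k, N₂ i (w₂ k) * b k j)
          + ∑ k ∈ univ.erase j, N₂ i (w₂ k) * b k j := by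
      rw [hsplit]; ring
    rw [heq]
    exact h.Madd _ hcong _ hrest
  have hw : w₁ j = w₂ j := by
    by_contra hne
    rcases lt_or_gt_of_ne hne with hlt | hgt
    · have h1 := hbB (w₂ j)
      rw [hN₂.1, mul_one, hN₁.below_pivot hlt, zero_sub] at h1
      have hbjj : b j j ∈ Mm := by
        have := h.Mneg _ h1; simpa using this
      have h2 := hbB (w₁ j)
      rw [hN₁.1] at h2
      have h3 : (1 : K) = (1 - b j j * N₂ (w₁ j) (w₂ j)) + b j j * N₂ (w₁ j) (w₂ j) := by ring
      exact h.Mone (h3 ▸ h.Madd _ h2 _ (h.MmulO _ hbjj _ (hN₂.entries h _ _)))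
    · have h1 := hbB (w₁ j)
      rw [hN₁.1, hN₂.below_pivot hgt, mul_zero, sub_zero] at h1
      exact h.Mone h1
  have hd : b j j - 1 ∈ Mm := by
    have h1 := hbB (w₁ j)
    rw [hN₁.1, hw, hN₂.1, mul_one] at h1
    have := h.Mneg _ h1
    simpa using this
  refine ⟨hw, fun i => ?_⟩
  have h1 := hbB i
  have heq : N₁ i (w₁ j) - N₂ i (w₂ j)
      = (N₁ i (w₁ j) - b j j * N₂ i (w₂ j)) + (b j j - 1) * N₂ i (w₂ j) := by ring
  rw [heq]
  exact h.Madd _ h1 _ (h.MmulO _ hd _ (hN₂.entries h _ _))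

/-- inverse of an integral unipotent upper triangular matrix is integral -/
lemma unipotent_inv {n : ℕ} (O' : Subring K) (nt : Matrix (Fin n) (Fin n) K)
    (htri : ∀ i k : Fin n, k < i → nt i k = 0) (hdiag : ∀ i, nt i i = 1)
    (hO : ∀ i k, nt i k ∈ O') :
    ∃ nt' : Matrix (Fin n) (Fin n) K, nt * nt' = 1 ∧ nt' * nt = 1 ∧
      ∀ i k, nt' i k ∈ O' := by
  set A : Matrix (Fin n) (Fin n) O' := fun i k => ⟨nt i k, hO i k⟩ with hAdef
  have hmap : A.map (O'.subtype : O' →+* K) = nt := by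
    ext i k; rfl
  have htriA : A.BlockTriangular id := by
    intro i k hik
    exact Subtype.ext (htri i k hik)
  have hdet : A.det = 1 := by
    rw [Matrix.det_of_upperTriangular htriA]
    have : ∀ i, A i i = 1 := fun i => Subtype.ext (hdiag i)
    simp [this]
  have : Invertible A := A.invertibleOfIsUnitDet (by rw [hdet]; exact isUnit_one)
  refine ⟨(⅟A).map (O'.subtype : O' →+* K), ?_, ?_, fun i k => ((⅟A) i k).2⟩
  · rw [← hmap, ← Matrix.map_mul, mul_invOf_self]
    simp
  · rw [← hmap, ← Matrix.map_mul, invOf_mul_self]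
    simp

section Inst

lemma mem_oF_iff {x : F} : x ∈ oF p F ↔ x ∈ integralClosure ℤ_[p] F := Iff.rfl

lemma oF_pow {π : F} (hπ : π ∈ oF p F) (k : ℕ) : π ^ k ∈ oF p F := by
  rw [mem_oF_iff]
  exact pow_mem hπ k

lemma oF_zpow {π : F} (hπ : π ∈ oF p F) (m : ℤ) (hm : 0 ≤ m) : π ^ m ∈ oF p F := by
  lift m to ℕ using hm
  rw [zpow_natCast]
  exact oF_pow p F hπ m

/-- Instantiation of all the abstract data for `o_F`, `π o_F`, `S`. -/
lemma mkDat (π : F) (hπ : π ∈ oF p F)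
    (hunif : ∀ x : F, x ≠ 0 →
      ∃ (m : ℤ) (u : F), u ∈ oF p F ∧ u⁻¹ ∈ oF p F ∧ x = u * π ^ m)
    (S : Set F) (hS0 : (0 : F) ∈ S) (hS1 : (1 : F) ∈ S) (hSsub : S ⊆ oF p F)
    (hSrep : ∀ x ∈ oF p F, ∃! s, s ∈ S ∧ x - s ∈ piO p F π) :
    Dat (oF p F) (piO p F π) S := by
  have Ozero : (0:F) ∈ oF p F := (mem_oF_iff p F).2 (zero_mem _)
  have Oone : (1:F) ∈ oF p F := (mem_oF_iff p F).2 (one_mem _)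
  have Oadd : ∀ a ∈ oF p F, ∀ b ∈ oF p F, a + b ∈ oF p F := fun a ha b hb =>
    (mem_oF_iff p F).2 (add_mem ((mem_oF_iff p F).1 ha) ((mem_oF_iff p F).1 hb))
  have Oneg : ∀ a ∈ oF p F, -a ∈ oF p F := fun a ha =>
    (mem_oF_iff p F).2 (neg_mem ((mem_oF_iff p F).1 ha))
  have Omul : ∀ a ∈ oF p F, ∀ b ∈ oF p F, a * b ∈ oF p F := fun a ha b hb =>
    (mem_oF_iff p F).2 (mul_mem ((mem_oF_iff p F).1 ha) ((mem_oF_iff p F).1 hb))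
  have Mzero : (0:F) ∈ piO p F π := ⟨0, Ozero, by ring⟩
  have MsubO : piO p F π ⊆ oF p F := by
    rintro x ⟨c, hc, rfl⟩
    exact Omul _ hπ _ hc
  refine
  { Ozero := Ozero
    Oone := Oone
    Oadd := Oadd
    Oneg := Oneg
    Omul := Omul
    Mzero := Mzero
    Madd := ?_
    Mneg := ?_
    MmulO := ?_
    MsubO := MsubO
    Mone := ?_
    total := ?_
    unitM := ?_
    S0 := hS0
    S1 := hS1
    Ssub := hSsub
    Srep := ?_
    Suniq := ?_ }
  · rintro a ⟨c, hc, rfl⟩ b ⟨c', hc', rfl⟩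
    exact ⟨c + c', Oadd _ hc _ hc', by ring⟩
  · rintro a ⟨c, hc, rfl⟩
    exact ⟨-c, Oneg _ hc, by ring⟩
  · rintro a ⟨c, hc, rfl⟩ b hb
    exact ⟨c * b, Omul _ hc _ hb, by ring⟩
  · intro hone
    obtain ⟨s, hs, huniq⟩ := hSrep 1 Oone
    have h0 : (0:F) = s := huniq 0 ⟨hS0, by simpa using hone⟩
    have h1 : (1:F) = s := huniq 1 ⟨hS1, by simpa using Mzero⟩
    exact one_ne_zero (h1.trans h0.symm)
  · -- total
    intro x y hx0 hy0
    obtain ⟨a, u, hu, hui, hx⟩ := hunif x hx0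
    obtain ⟨c, v, hv, hvi, hy⟩ := hunif y hy0
    by_cases hπ0 : π = 0
    · subst hπ0
      have ha0 : a = 0 := by
        by_contra ha
        rw [_root_.zero_zpow a ha, mul_zero] at hx
        exact hx0 hx
      have hc0 : c = 0 := by
        by_contra hc'
        rw [_root_.zero_zpow c hc', mul_zero] at hy
        exact hy0 hy
      subst ha0; subst hc0
      rw [zpow_zero, mul_one] at hx hy
      left
      rw [hx, hy]
      exact Omul _ hu _ hvi
    · have key : ∀ m : ℤ, x * y⁻¹ = (u * v⁻¹) * π ^ (a - c) := by
        intro _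
        rw [hx, hy, mul_inv, ← _root_.zpow_neg, sub_eq_add_neg, zpow_add₀ hπ0]
        ring
      rcases le_total c a with hca | hac
      · left
        rw [key 0]
        exact Omul _ (Omul _ hu _ hvi) _ (oF_zpow p F hπ _ (by omega))
      · right
        have : y * x⁻¹ = (v * u⁻¹) * π ^ (c - a) := by
          rw [hx, hy, mul_inv, ← _root_.zpow_neg, sub_eq_add_neg, zpow_add₀ hπ0]
          ring
        rw [this]
        exact Omul _ (Omul _ hv _ hui) _ (oF_zpow p F hπ _ (by omega))
  · -- unitM
    intro x hxO
    by_cases hx0 : x = 0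
    · left; rw [hx0]; exact Mzero
    obtain ⟨m, u, hu, hui, hx⟩ := hunif x hx0
    by_cases hπ0 : π = 0
    · subst hπ0
      have hm0 : m = 0 := by
        by_contra hm
        rw [_root_.zero_zpow m hm, mul_zero] at hx
        exact hx0 hx
      subst hm0
      rw [zpow_zero, mul_one] at hx
      right
      exact ⟨hx0, by rw [hx]; exact hui⟩
    · rcases le_or_gt m 0 with hm | hm
      · right
        refine ⟨hx0, ?_⟩
        have : x⁻¹ = u⁻¹ * π ^ (-m) := by
          rw [hx, mul_inv, ← _root_.zpow_neg]
        rw [this]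
        exact Omul _ hui _ (oF_zpow p F hπ _ (by omega))
      · left
        refine ⟨u * π ^ (m - 1), Omul _ hu _ (oF_zpow p F hπ _ (by omega)), ?_⟩
        rw [hx]
        have : π ^ m = π * π ^ (m - 1) := by
          rw [← zpow_one_add₀ hπ0]
          congr 1
          ring
        rw [this]
        ring
  · -- Srep
    intro x hx
    obtain ⟨s, ⟨hs, hsM⟩, _⟩ := hSrep x hx
    exact ⟨s, hs, hsM⟩
  · -- Suniq
    intro s hs s' hs' hss
    obtain ⟨t, ht, huniq⟩ := hSrep s (hSsub hs)
    have h1 : s = t := huniq s ⟨hs, by simpa using Mzero⟩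
    have h2 : s' = t := huniq s' ⟨hs', hss⟩
    exact h1.trans h2.symm

end Inst
section Ext
variable {A B Cc : Type} [DecidableEq A] [DecidableEq B] [DecidableEq Cc]

/-- extend a matrix on complements of `a`, `b` by `1` at `(a, b)`. -/
def ext1 (a : A) (b : B) (X : Matrix {x // x ≠ a} {y // y ≠ b} K) : Matrix A B K :=
  fun i j =>
    if hi : i = a then (if j = b then 1 else 0)
    else if hj : j = b then 0 else X ⟨i, hi⟩ ⟨j, hj⟩

lemma ext1_apply_row (a : A) (b : B) (X : Matrix {x // x ≠ a} {y // y ≠ b} K) (j : B) :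
    ext1 a b X a j = if j = b then 1 else 0 := by simp [ext1]

lemma ext1_apply_col (a : A) (b : B) (X : Matrix {x // x ≠ a} {y // y ≠ b} K)
    {i : A} (hi : i ≠ a) : ext1 a b X i b = 0 := by simp [ext1, hi]

lemma ext1_apply (a : A) (b : B) (X : Matrix {x // x ≠ a} {y // y ≠ b} K)
    {i : A} {j : B} (hi : i ≠ a) (hj : j ≠ b) : ext1 a b X i j = X ⟨i, hi⟩ ⟨j, hj⟩ := by
  simp [ext1, hi, hj]

lemma ext1_mul [Fintype B] (a : A) (b : B) (c : Cc)
    (X : Matrix {x // x ≠ a} {y // y ≠ b} K) (Y : Matrix {y // y ≠ b} {z // z ≠ c} K) :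
    ext1 a b X * ext1 b c Y = ext1 a c (X * Y) := by
  ext i j
  rw [Matrix.mul_apply, sum_split b (fun k => ext1 a b X i k * ext1 b c Y k j)]
  by_cases hi : i = a
  · rw [hi]
    rw [ext1_apply_row, ext1_apply_row, if_pos rfl, one_mul, ext1_apply_row]
    rw [Finset.sum_eq_zero, add_zero]
    intro k _
    rw [ext1_apply_row, if_neg k.2, zero_mul]
  · rw [ext1_apply_col a b X hi, zero_mul, zero_add]
    by_cases hj : j = c
    · rw [hj]
      rw [ext1_apply_col a c (X * Y) hi]
      apply Finset.sum_eq_zero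
      intro k _
      rw [ext1_apply_col b c Y k.2, mul_zero]
    · rw [ext1_apply a c (X * Y) hi hj, Matrix.mul_apply]
      apply Finset.sum_congr rfl
      intro k _
      rw [ext1_apply a b X hi k.2, ext1_apply b c Y k.2 hj]

lemma ext1_one (a : A) : ext1 a a (1 : Matrix {x // x ≠ a} {x // x ≠ a} K) = 1 := by
  ext i j
  by_cases hi : i = a
  · rw [hi]
    rw [ext1_apply_row]
    by_cases hj : j = a
    · rw [hj]; simp
    · rw [if_neg hj, Matrix.one_apply_ne (fun hc => (hc ▸ hj) rfl)]
  · by_cases hj : j = a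
    · rw [hj]
      rw [ext1_apply_col a a _ hi, Matrix.one_apply_ne hi]
    · rw [ext1_apply a a _ hi hj, Matrix.one_apply, Matrix.one_apply]
      simp [Subtype.ext_iff]

end Ext

section U1lems
variable {O Mm S : Set K} {R : Type} [Fintype R] [LinearOrder R] [DecidableEq R]

lemma oneM (h : Dat O Mm S) (i k : R) : (1 : Matrix R R K) i k ∈ O := by
  by_cases hik : i = k
  · subst hik; rw [Matrix.one_apply_eq]; exact h.Oone
  · rw [Matrix.one_apply_ne hik]; exact h.Ozero

lemma U1G.mul (h : Dat O Mm S) {u₁ u₁inv u₂ u₂inv : Matrix R R K}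
    (h1 : U1G O Mm u₁ u₁inv) (h2 : U1G O Mm u₂ u₂inv) :
    U1G O Mm (u₁ * u₂) (u₂inv * u₁inv) := by
  have mulO : ∀ (P Q : Matrix R R K), (∀ i k, P i k ∈ O) → (∀ i k, Q i k ∈ O) →
      ∀ i k, (P * Q) i k ∈ O := by
    intro P Q hP hQ i k
    rw [Matrix.mul_apply]
    exact h.OsumF _ _ (fun l _ => h.Omul _ (hP i l) _ (hQ l k))
  have mulM : ∀ (P Q Pinv Qinv : Matrix R R K), U1G O Mm P Pinv → U1G O Mm Q Qinv →
      ∀ i k, (P * Q) i k - (1 : Matrix R R K) i k ∈ Mm := by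
    intro P Q Pinv Qinv hP hQ i k
    have hPQ : P * Q - 1 = (P - 1) * Q + (Q - 1) := by noncomm_ring
    have : (P * Q) i k - (1 : Matrix R R K) i k = (P * Q - 1) i k := by
      simp [Matrix.sub_apply]
    rw [this, hPQ, Matrix.add_apply, Matrix.mul_apply]
    refine h.Madd _ (h.MsumF _ _ (fun l _ => ?_)) _ (by simpa [Matrix.sub_apply] using hQ.uM i k)
    have h1 : (P - 1) i l ∈ Mm := by simpa [Matrix.sub_apply] using hP.uM i l
    exact h.MmulO _ h1 _ (hQ.uO l k)
  refine ⟨mulO _ _ h1.uO h2.uO, mulO _ _ h2.uinvO h1.uinvO, ?_, ?_, ?_, ?_⟩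
  · calc u₁ * u₂ * (u₂inv * u₁inv) = u₁ * (u₂ * u₂inv) * u₁inv := by
          simp only [Matrix.mul_assoc]
      _ = 1 := by rw [h2.mul_inv, Matrix.mul_one, h1.mul_inv]
  · calc u₂inv * u₁inv * (u₁ * u₂) = u₂inv * (u₁inv * u₁) * u₂ := by
          simp only [Matrix.mul_assoc]
      _ = 1 := by rw [h1.inv_mul, Matrix.mul_one, h2.inv_mul]
  · exact mulM _ _ _ _ h1 h2
  · exact mulM _ _ _ _ (⟨h2.uinvO, h2.uO, h2.inv_mul, h2.mul_inv, h2.uinvM, h2.uM⟩)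
      (⟨h1.uinvO, h1.uO, h1.inv_mul, h1.mul_inv, h1.uinvM, h1.uM⟩)

/-- elementary `U⁽¹⁾`-matrices `1 ± E` with `E² = 0`, `E ≡ 0 (mod M)` -/
lemma U1G.elem (h : Dat O Mm S) {E : Matrix R R K} (hE : ∀ i k, E i k ∈ Mm)
    (hEE : E * E = 0) : U1G O Mm (1 + E) (1 - E) := by
  have h1 : (1 + E) * (1 - E) = 1 - E * E := by noncomm_ring
  have h2 : (1 - E) * (1 + E) = 1 - E * E := by noncomm_ring
  refine ⟨?_, ?_, ?_, ?_, ?_, ?_⟩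
  · intro i k
    rw [Matrix.add_apply]
    exact h.Oadd _ (oneM h i k) _ (h.MsubO (hE i k))
  · intro i k
    rw [Matrix.sub_apply]
    exact h.Osub (oneM h i k) (h.MsubO (hE i k))
  · rw [h1, hEE, sub_zero]
  · rw [h2, hEE, sub_zero]
  · intro i k
    simpa [Matrix.add_apply] using hE i k
  · intro i k
    have : (1 - E) i k - (1 : Matrix R R K) i k = -(E i k) := by
      simp [Matrix.sub_apply]
    rw [this]
    exact h.Mneg _ (hE i k)

/-- `ext1` preserves the `U⁽¹⁾` conditions. -/
lemma U1G.ext1 (h : Dat O Mm S) (a : R) {u uinv : Matrix {x // x ≠ a} {x // x ≠ a} K}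
    (hu : U1G O Mm u uinv) :
    U1G O Mm (Stmt9.ext1 a a u) (Stmt9.ext1 a a uinv) := by
  have entO : ∀ (X : Matrix {x // x ≠ a} {x // x ≠ a} K), (∀ i k, X i k ∈ O) →
      ∀ i k, Stmt9.ext1 a a X i k ∈ O := by
    intro X hX i k
    by_cases hi : i = a
    · rw [hi]
      rw [ext1_apply_row]
      split
      · exact h.Oone
      · exact h.Ozero
    · by_cases hk : k = a
      · rw [hk]
        rw [ext1_apply_col a a X hi]
        exact h.Ozero
      · rw [ext1_apply a a X hi hk]
        exact hX _ _
  have entM : ∀ (X : Matrix {x // x ≠ a} {x // x ≠ a} K),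
      (∀ i k, X i k - (1 : Matrix _ _ K) i k ∈ Mm) →
      ∀ i k, Stmt9.ext1 a a X i k - (1 : Matrix R R K) i k ∈ Mm := by
    intro X hX i k
    by_cases hi : i = a
    · rw [hi]
      rw [ext1_apply_row]
      by_cases hk : k = a
      · rw [hk]
        simpa using h.Mzero
      · rw [if_neg hk, Matrix.one_apply_ne (fun hc => (hc ▸ hk) rfl)]
        simpa using h.Mzero
    · by_cases hk : k = a
      · rw [hk]
        rw [ext1_apply_col a a X hi, Matrix.one_apply_ne hi]
        simpa using h.Mzero
      · rw [ext1_apply a a X hi hk]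
        have := hX ⟨i, hi⟩ ⟨k, hk⟩
        by_cases hik : i = k
        · subst hik
          simpa using (by simpa using this : X ⟨i, hi⟩ ⟨i, hi⟩ - 1 ∈ Mm)
        · rw [Matrix.one_apply_ne hik]
          have hne : (⟨i, hi⟩ : {x // x ≠ a}) ≠ ⟨k, hk⟩ := by
            simp [Subtype.ext_iff, hik]
          rw [Matrix.one_apply_ne hne] at this
          simpa using this
  refine ⟨entO u hu.uO, entO uinv hu.uinvO, ?_, ?_, entM u hu.uM, entM uinv hu.uinvM⟩
  · rw [ext1_mul, hu.mul_inv, ext1_one]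
  · rw [ext1_mul, hu.inv_mul, ext1_one]

end U1lems

section Exists
variable {O Mm S : Set K}

/-- existence of an entry of minimal valuation -/
lemma val_min (h : Dat O Mm S) {A : Type} [DecidableEq A] (s : Finset A) (v : A → K)
    (hex : ∃ a ∈ s, v a ≠ 0) : ∃ a ∈ s, v a ≠ 0 ∧ ∀ b ∈ s, v b * (v a)⁻¹ ∈ O := by
  classical
  induction s using Finset.induction with
  | empty =>
    obtain ⟨a, ha, _⟩ := hex
    exact absurd ha (Finset.notMem_empty a)
  | insert _ _ hnot ih =>
    rename_i a s
    by_cases hs : ∃ b ∈ s, v b ≠ 0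
    · obtain ⟨i, his, hi0, hmin⟩ := ih hs
      by_cases hva : v a = 0
      · refine ⟨i, Finset.mem_insert_of_mem his, hi0, ?_⟩
        intro b hb
        rcases Finset.mem_insert.1 hb with rfl | hb'
        · rw [hva, zero_mul]; exact h.Ozero
        · exact hmin b hb'
      · rcases h.total (v a) (v i) hva hi0 with hai | hia
        · refine ⟨i, Finset.mem_insert_of_mem his, hi0, ?_⟩
          intro b hb
          rcases Finset.mem_insert.1 hb with rfl | hb'
          · exact hai
          · exact hmin b hb'
        · refine ⟨a, Finset.mem_insert_self a s, hva, ?_⟩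
          intro b hb
          rcases Finset.mem_insert.1 hb with rfl | hb'
          · rw [mul_inv_cancel₀ hva]; exact h.Oone
          · have h2 : (v b * (v i)⁻¹) * (v i * (v a)⁻¹) = v b * (v a)⁻¹ := by
              rw [mul_assoc, ← mul_assoc (v i)⁻¹, inv_mul_cancel₀ hi0, one_mul]
            rw [← h2]
            exact h.Omul _ (hmin b hb') _ hia
    · have hva : v a ≠ 0 := by
        obtain ⟨b, hbmem, hb0⟩ := hex
        rcases Finset.mem_insert.1 hbmem with rfl | hb'
        · exact hb0
        · exact absurd ⟨b, hb', hb0⟩ hs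
      refine ⟨a, Finset.mem_insert_self a s, hva, ?_⟩
      intro b hb
      rcases Finset.mem_insert.1 hb with rfl | hb'
      · rw [mul_inv_cancel₀ hva]; exact h.Oone
      · have : v b = 0 := by
          by_contra hb0
          exact hs ⟨b, hb', hb0⟩
        rw [this, zero_mul]; exact h.Ozero

/-- the conclusion of the existence statement -/
def Conc (O Mm S : Set K) (R C : Type) [Fintype R] [LinearOrder R] [Fintype C]
    [LinearOrder C] [DecidableEq R] [DecidableEq C] (g : Matrix R C K) : Prop :=
  ∃ (w : C ≃ R) (N u uinv : Matrix R R K) (b binv : Matrix C C K),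
    NFG S w N ∧ U1G O Mm u uinv ∧ BorelG b ∧ b * binv = 1 ∧ binv * b = 1 ∧
    g = u * (N * (pmat w : Matrix R C K)) * b

lemma stepNF (h : Dat O Mm S) {m : ℕ} (R C : Type) [Fintype R] [LinearOrder R]
    [Fintype C] [LinearOrder C] [DecidableEq R] [DecidableEq C]
    (hcR : Fintype.card R = m + 1) (hcC : Fintype.card C = m + 1)
    (IH : ∀ (R' C' : Type) [Fintype R'] [LinearOrder R'] [Fintype C'] [LinearOrder C']
      [DecidableEq R'] [DecidableEq C'],
      Fintype.card R' = m → Fintype.card C' = m →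
      ∀ (g : Matrix R' C' K) (ginv : Matrix C' R' K), g * ginv = 1 → ginv * g = 1 → Conc O Mm S R' C' g)
    (g : Matrix R C K) (ginv : Matrix C R K) (hgi : g * ginv = 1) (hig : ginv * g = 1) :
    Conc O Mm S R C g := by
  classical
  haveI : Nonempty R := Fintype.card_pos_iff.1 (by rw [hcR]; exact Nat.succ_pos m)
  haveI : Nonempty C := Fintype.card_pos_iff.1 (by rw [hcC]; exact Nat.succ_pos m)
  set j₀ : C := Finset.univ.min' Finset.univ_nonempty with hj₀def
  have hj₀ : ∀ j : C, j₀ ≤ j := fun j => Finset.min'_le _ _ (Finset.mem_univ j)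
  have hcol : ∃ i, g i j₀ ≠ 0 := by
    by_contra hc
    push_neg at hc
    have h1 := congrFun (congrFun hig j₀) j₀
    rw [Matrix.mul_apply, Finset.sum_eq_zero (fun i _ => by rw [hc i, mul_zero])] at h1
    rw [Matrix.one_apply_eq] at h1
    exact one_ne_zero h1.symm
  obtain ⟨i₁, -, hi₁0, hi₁min⟩ := val_min h Finset.univ (fun i => g i j₀)
    (by obtain ⟨i, hi⟩ := hcol; exact ⟨i, Finset.mem_univ i, hi⟩)
  set T : Finset R := Finset.univ.filter
    (fun i => g i j₀ ≠ 0 ∧ ∀ i', g i' j₀ * (g i j₀)⁻¹ ∈ O) with hTdef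
  have hTne : T.Nonempty :=
    ⟨i₁, Finset.mem_filter.2 ⟨Finset.mem_univ _, hi₁0, fun i' => hi₁min i' (Finset.mem_univ i')⟩⟩
  set i₀ : R := T.max' hTne with hi₀def
  have hi₀T := T.max'_mem hTne
  rw [Finset.mem_filter] at hi₀T
  obtain ⟨-, hpv0, hall⟩ := hi₀T
  have hmax : ∀ i ∈ T, i ≤ i₀ := fun i hi => T.le_max' i hi
  have hbelow : ∀ i : R, i₀ < i → g i j₀ * (g i₀ j₀)⁻¹ ∈ Mm := by
    intro i hi
    rcases h.unitM _ (hall i) with hM | ⟨hne, hinv⟩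
    · exact hM
    · exfalso
      have hgne : g i j₀ ≠ 0 := left_ne_zero_of_mul hne
      have hmem : i ∈ T := by
        refine Finset.mem_filter.2 ⟨Finset.mem_univ _, hgne, ?_⟩
        intro i'
        have e : g i' j₀ * (g i j₀)⁻¹
            = (g i' j₀ * (g i₀ j₀)⁻¹) * (g i j₀ * (g i₀ j₀)⁻¹)⁻¹ := by
          rw [mul_inv, inv_inv]
          symm
          calc g i' j₀ * (g i₀ j₀)⁻¹ * ((g i j₀)⁻¹ * g i₀ j₀)
              = g i' j₀ * (g i j₀)⁻¹ * ((g i₀ j₀)⁻¹ * g i₀ j₀) := by ring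
            _ = g i' j₀ * (g i j₀)⁻¹ := by rw [inv_mul_cancel₀ hpv0, mul_one]
        rw [e]
        exact h.Omul _ (hall i') _ hinv
      exact absurd (hmax i hmem) (not_le.2 hi)
  -- the first Borel column operation
  set b₁ : Matrix C C K := (fun j j' => if j = j₀ then
      (if j' = j₀ then (g i₀ j₀)⁻¹ else -((g i₀ j₀)⁻¹ * g i₀ j'))
    else (if j = j' then 1 else 0)) with hb₁def
  set b₁inv : Matrix C C K := (fun j j' => if j = j₀ then g i₀ j'
    else (if j = j' then 1 else 0)) with hb₁invdef
  have hb₁e : ∀ j j', b₁ j j' = if j = j₀ then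
      (if j' = j₀ then (g i₀ j₀)⁻¹ else -((g i₀ j₀)⁻¹ * g i₀ j'))
    else (if j = j' then 1 else 0) := fun _ _ => rfl
  have hb₁inve : ∀ j j', b₁inv j j' = if j = j₀ then g i₀ j'
    else (if j = j' then 1 else 0) := fun _ _ => rfl
  have hmul1 : b₁ * b₁inv = 1 := by
    ext j j'
    rw [Matrix.mul_apply]
    by_cases hj : j = j₀
    · rw [hj, sum_split j₀ (fun k => b₁ j₀ k * b₁inv k j')]
      by_cases hj' : j' = j₀
      · rw [hj', Finset.sum_eq_zero (fun (k : {y : C // y ≠ j₀}) _ => by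
          rw [hb₁inve, if_neg k.2, if_neg (fun hc => k.2 hc), mul_zero]), add_zero]
        rw [hb₁e, hb₁inve]
        simp [inv_mul_cancel₀ (show g i₀ j₀ ≠ 0 from hpv0)]
      · have hne : j₀ ≠ j' := fun hc => hj' hc.symm
        rw [Fintype.sum_eq_single (⟨j', hj'⟩ : {y : C // y ≠ j₀}) (fun k hk => by
          rw [hb₁inve, if_neg k.2, if_neg (fun hc => hk (Subtype.ext hc)), mul_zero])]
        rw [hb₁e, hb₁e, hb₁inve, hb₁inve, Matrix.one_apply_ne hne]
        simp [hj']
    · rw [Finset.sum_eq_single j (fun k _ hk => by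
        rw [hb₁e, if_neg hj, if_neg (fun hc => hk hc.symm), zero_mul])
        (fun hc => absurd (Finset.mem_univ j) hc)]
      rw [hb₁e, hb₁inve, if_neg hj, if_pos rfl, if_neg hj, one_mul, Matrix.one_apply]
  have hmul2 : b₁inv * b₁ = 1 := by
    ext j j'
    rw [Matrix.mul_apply]
    by_cases hj : j = j₀
    · rw [hj, sum_split j₀ (fun k => b₁inv j₀ k * b₁ k j')]
      by_cases hj' : j' = j₀
      · rw [hj', Finset.sum_eq_zero (fun (k : {y : C // y ≠ j₀}) _ => by
          rw [hb₁e, if_neg k.2, if_neg (fun hc => k.2 hc), mul_zero]), add_zero]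
        rw [hb₁e, hb₁inve]
        simp [mul_inv_cancel₀ (show g i₀ j₀ ≠ 0 from hpv0)]
      · have hne : j₀ ≠ j' := fun hc => hj' hc.symm
        rw [Fintype.sum_eq_single (⟨j', hj'⟩ : {y : C // y ≠ j₀}) (fun k hk => by
          rw [hb₁e, if_neg k.2, if_neg (fun hc => hk (Subtype.ext hc)), mul_zero])]
        rw [hb₁e, hb₁e, hb₁inve, hb₁inve, Matrix.one_apply_ne hne]
        have e1 : ∀ x y : K, x * -(x⁻¹ * y) = -((x * x⁻¹) * y) := fun x y => by ring
        simp [hj', e1, mul_inv_cancel₀ (show g i₀ j₀ ≠ 0 from hpv0)]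
    · rw [Finset.sum_eq_single j (fun k _ hk => by
        rw [hb₁inve, if_neg hj, if_neg (fun hc => hk hc.symm), zero_mul])
        (fun hc => absurd (Finset.mem_univ j) hc)]
      rw [hb₁e, hb₁inve, if_neg hj, if_pos rfl, if_neg hj, one_mul, Matrix.one_apply]
  -- gb = g * b₁
  set gb : Matrix R C K := g * b₁ with hgbdef
  have hgb : ∀ i j, gb i j = if j = j₀ then g i j₀ * (g i₀ j₀)⁻¹
      else g i j - g i j₀ * ((g i₀ j₀)⁻¹ * g i₀ j) := by
    intro i j
    rw [hgbdef, Matrix.mul_apply, sum_split j₀ (fun k => g i k * b₁ k j)]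
    by_cases hj : j = j₀
    · rw [hj, Finset.sum_eq_zero (fun (k : {y : C // y ≠ j₀}) _ => by
        rw [hb₁e, if_neg k.2, if_neg (fun hc => k.2 hc), mul_zero]), add_zero]
      rw [hb₁e]
      simp
    · rw [Fintype.sum_eq_single (⟨j, hj⟩ : {y : C // y ≠ j₀}) (fun k hk => by
        rw [hb₁e, if_neg k.2, if_neg (fun hc => hk (Subtype.ext hc)), mul_zero])]
      rw [hb₁e, hb₁e, if_neg hj]
      simp [hj]
      ring
  have hrow : ∀ j, gb i₀ j = if j = j₀ then 1 else 0 := by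
    intro j
    rw [hgb]
    by_cases hj : j = j₀
    · rw [if_pos hj, if_pos hj, mul_inv_cancel₀ hpv0]
    · rw [if_neg hj, if_neg hj]
      calc g i₀ j - g i₀ j₀ * ((g i₀ j₀)⁻¹ * g i₀ j)
          = g i₀ j - (g i₀ j₀ * (g i₀ j₀)⁻¹) * g i₀ j := by ring
        _ = 0 := by rw [mul_inv_cancel₀ hpv0, one_mul, sub_self]
  have hpiv : gb i₀ j₀ = 1 := by rw [hrow, if_pos rfl]
  have hcolO : ∀ i, gb i j₀ ∈ O := by
    intro i
    rw [hgb, if_pos rfl]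
    exact hall i
  have hcolM : ∀ i, i₀ < i → gb i j₀ ∈ Mm := by
    intro i hi
    rw [hgb, if_pos rfl]
    exact hbelow i hi
  -- inverse of gb
  set gbinv : Matrix C R K := b₁inv * ginv with hgbinvdef
  have hgb1 : gb * gbinv = 1 := by
    rw [hgbdef, hgbinvdef]
    calc g * b₁ * (b₁inv * ginv) = g * (b₁ * b₁inv) * ginv := by simp only [Matrix.mul_assoc]
      _ = 1 := by rw [hmul1, Matrix.mul_one, hgi]
  have hgb2 : gbinv * gb = 1 := by
    rw [hgbdef, hgbinvdef]
    calc b₁inv * ginv * (g * b₁) = b₁inv * (ginv * g) * b₁ := by simp only [Matrix.mul_assoc]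
      _ = 1 := by rw [hig, Matrix.mul_one, hmul2]
  -- row `j₀` of the inverse vanishes off `i₀`
  have hginvb_row : ∀ i', i' ≠ i₀ → gbinv j₀ i' = 0 := by
    intro i' hi'
    have h1 := congrFun (congrFun hgb1 i₀) i'
    rw [Matrix.mul_apply] at h1
    rw [Finset.sum_eq_single j₀ (fun k _ hk => by rw [hrow, if_neg hk, zero_mul])
      (fun hc => absurd (Finset.mem_univ j₀) hc)] at h1
    rw [hpiv, one_mul] at h1
    rw [h1, Matrix.one_apply_ne (fun hc => hi' hc.symm)]
  -- the submatrix and its inverse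
  set gs : Matrix {i : R // i ≠ i₀} {j : C // j ≠ j₀} K := fun i j => gb i.1 j.1 with hgsdef
  set gsinv : Matrix {j : C // j ≠ j₀} {i : R // i ≠ i₀} K := fun j i => gbinv j.1 i.1
    with hgsinvdef
  have hgs1 : gs * gsinv = 1 := by
    ext i i'
    have h1 := congrFun (congrFun hgb1 i.1) i'.1
    rw [Matrix.mul_apply, sum_split j₀ (fun k => gb i.1 k * gbinv k i'.1)] at h1
    rw [hginvb_row i'.1 i'.2, mul_zero, zero_add] at h1
    rw [Matrix.mul_apply]
    rw [show (∑ k : {y : C // y ≠ j₀}, gs i k * gsinv k i')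
      = ∑ k : {y : C // y ≠ j₀}, gb i.1 k.1 * gbinv k.1 i'.1 from rfl, h1]
    by_cases hii : i = i'
    · rw [hii, Matrix.one_apply_eq, Matrix.one_apply_eq]
    · rw [Matrix.one_apply_ne (fun hc => hii (Subtype.ext hc)), Matrix.one_apply_ne hii]
  have hgs2 : gsinv * gs = 1 := by
    ext j j'
    have h1 := congrFun (congrFun hgb2 j.1) j'.1
    rw [Matrix.mul_apply, sum_split i₀ (fun k => gbinv j.1 k * gb k j'.1)] at h1
    rw [hrow j'.1, if_neg j'.2, mul_zero, zero_add] at h1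
    rw [Matrix.mul_apply]
    rw [show (∑ k : {x : R // x ≠ i₀}, gsinv j k * gs k j')
      = ∑ k : {x : R // x ≠ i₀}, gbinv j.1 k.1 * gb k.1 j'.1 from rfl, h1]
    by_cases hjj : j = j'
    · rw [hjj, Matrix.one_apply_eq, Matrix.one_apply_eq]
    · rw [Matrix.one_apply_ne (fun hc => hjj (Subtype.ext hc)), Matrix.one_apply_ne hjj]
  have hcR' : Fintype.card {i : R // i ≠ i₀} = m := by
    rw [Fintype.card_subtype_compl, Fintype.card_subtype_eq, hcR]; omega
  have hcC' : Fintype.card {j : C // j ≠ j₀} = m := by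
    rw [Fintype.card_subtype_compl, Fintype.card_subtype_eq, hcC]; omega
  obtain ⟨w', N', u', u'inv, b', b'inv, hNF', hU1', hB', hb'1, hb'2, heq'⟩ :=
    IH _ _ hcR' hcC' gs gsinv hgs1 hgs2
  -- extend u'
  set U : Matrix R R K := ext1 i₀ i₀ u' with hUdef
  set Uinv : Matrix R R K := ext1 i₀ i₀ u'inv with hUinvdef
  have hUU : U * Uinv = 1 := by rw [hUdef, hUinvdef, ext1_mul, hU1'.mul_inv, ext1_one]
  have hUU2 : Uinv * U = 1 := by rw [hUdef, hUinvdef, ext1_mul, hU1'.inv_mul, ext1_one]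
  set X : Matrix R C K := Uinv * gb with hXdef
  have hXrow : ∀ j, X i₀ j = if j = j₀ then 1 else 0 := by
    intro j
    rw [hXdef, Matrix.mul_apply]
    rw [Finset.sum_eq_single i₀ (fun k _ hk => by
        rw [hUinvdef, ext1_apply_row, if_neg hk, zero_mul])
      (fun hc => absurd (Finset.mem_univ i₀) hc)]
    rw [hUinvdef, ext1_apply_row, if_pos rfl, one_mul, hrow]
  have hXsub : ∀ (i : {x : R // x ≠ i₀}) (j : {y : C // y ≠ j₀}),
      X i.1 j.1 = (u'inv * gs) i j := by
    intro i j
    rw [hXdef, Matrix.mul_apply, sum_split i₀ (fun k => Uinv i.1 k * gb k j.1)]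
    rw [hUinvdef, ext1_apply_col i₀ i₀ u'inv i.2, zero_mul, zero_add, Matrix.mul_apply]
    apply Finset.sum_congr rfl
    intro k _
    rw [ext1_apply i₀ i₀ u'inv i.2 k.2]
  have hXcolO : ∀ i, X i j₀ ∈ O := by
    intro i
    by_cases hi : i = i₀
    · rw [hi]
      have h1 := hXrow j₀
      rw [if_pos rfl] at h1
      rw [h1]
      exact h.Oone
    · rw [hXdef, Matrix.mul_apply, sum_split i₀ (fun k => Uinv i k * gb k j₀)]
      rw [hUinvdef, ext1_apply_col i₀ i₀ u'inv hi, zero_mul, zero_add]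
      apply h.OsumF
      intro k _
      rw [ext1_apply i₀ i₀ u'inv hi k.2]
      exact h.Omul _ (hU1'.uinvO _ _) _ (hcolO k.1)
  have hXcolM : ∀ i, i₀ < i → X i j₀ ∈ Mm := by
    intro i hi
    have hine : i ≠ i₀ := ne_of_gt hi
    rw [hXdef, Matrix.mul_apply, sum_split i₀ (fun k => Uinv i k * gb k j₀)]
    rw [hUinvdef, ext1_apply_col i₀ i₀ u'inv hine, zero_mul, zero_add]
    apply h.MsumF
    intro k _
    rw [ext1_apply i₀ i₀ u'inv hine k.2]
    by_cases hk : k = (⟨i, hine⟩ : {x : R // x ≠ i₀})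
    · rw [hk]
      exact h.OmulM (hU1'.uinvO _ _) (hcolM i hi)
    · have hoff : u'inv ⟨i, hine⟩ k ∈ Mm := by
        have h2 := hU1'.uinvM ⟨i, hine⟩ k
        rw [Matrix.one_apply_ne (fun hc => hk hc.symm)] at h2
        simpa using h2
      exact h.MmulO _ hoff _ (hcolO k.1)
  -- peel off b'
  set Be : Matrix C C K := ext1 j₀ j₀ b' with hBedef
  set Beinv : Matrix C C K := ext1 j₀ j₀ b'inv with hBeinvdef
  have hBe1 : Be * Beinv = 1 := by rw [hBedef, hBeinvdef, ext1_mul, hb'1, ext1_one]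
  have hBe2 : Beinv * Be = 1 := by rw [hBedef, hBeinvdef, ext1_mul, hb'2, ext1_one]
  set Y : Matrix R C K := X * Beinv with hYdef
  have hYcol : ∀ i, Y i j₀ = X i j₀ := by
    intro i
    rw [hYdef, Matrix.mul_apply]
    rw [Finset.sum_eq_single j₀ (fun k _ hk => by
        rw [hBeinvdef, ext1_apply_col j₀ j₀ b'inv hk, mul_zero])
      (fun hc => absurd (Finset.mem_univ j₀) hc)]
    rw [hBeinvdef, ext1_apply_row, if_pos rfl, mul_one]
  have hYrow : ∀ j, Y i₀ j = if j = j₀ then 1 else 0 := by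
    intro j
    rw [hYdef, Matrix.mul_apply]
    rw [Finset.sum_eq_single j₀ (fun k _ hk => by rw [hXrow, if_neg hk, zero_mul])
      (fun hc => absurd (Finset.mem_univ j₀) hc)]
    rw [hXrow, if_pos rfl, one_mul, hBeinvdef, ext1_apply_row]
  have hYsub : ∀ (i : {x : R // x ≠ i₀}) (j : {y : C // y ≠ j₀}),
      Y i.1 j.1 = (N' * (pmat w' : Matrix {x : R // x ≠ i₀} {y : C // y ≠ j₀} K)) i j := by
    have hYs : (fun (i : {x : R // x ≠ i₀}) (j : {y : C // y ≠ j₀}) => Y i.1 j.1)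
        = u'inv * gs * b'inv := by
      ext i j
      rw [hYdef, Matrix.mul_apply, sum_split j₀ (fun k => X i.1 k * Beinv k j.1)]
      rw [hBeinvdef, ext1_apply_row, if_neg j.2, mul_zero, zero_add, Matrix.mul_apply]
      apply Finset.sum_congr rfl
      intro k _
      rw [ext1_apply j₀ j₀ b'inv k.2 j.2, hXsub i k]
    have hcl : u'inv * gs * b'inv
        = N' * (pmat w' : Matrix {x : R // x ≠ i₀} {y : C // y ≠ j₀} K) := by
      rw [heq']
      calc u'inv * (u' * (N' * (pmat w' : Matrix {x : R // x ≠ i₀} {y : C // y ≠ j₀} K)) * b')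
              * b'inv
          = (u'inv * u') * ((N' * (pmat w' : Matrix {x : R // x ≠ i₀} {y : C // y ≠ j₀} K))
              * (b' * b'inv)) := by simp only [Matrix.mul_assoc]
        _ = N' * (pmat w' : Matrix {x : R // x ≠ i₀} {y : C // y ≠ j₀} K) := by
            rw [hU1'.inv_mul, hb'1, Matrix.one_mul, Matrix.mul_one]
    intro i j
    rw [show Y i.1 j.1
      = (fun (i : {x : R // x ≠ i₀}) (j : {y : C // y ≠ j₀}) => Y i.1 j.1) i j from rfl]
    rw [hYs, hcl]
  -- S-representatives of column j₀
  have hσex : ∀ i : R, ∃ s, s ∈ S ∧ X i j₀ - s ∈ Mm := fun i => h.Srep _ (hXcolO i)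
  set σ : R → K := fun i => (hσex i).choose with hσdef
  have hσS : ∀ i, σ i ∈ S := fun i => (hσex i).choose_spec.1
  have hσM : ∀ i, X i j₀ - σ i ∈ Mm := fun i => (hσex i).choose_spec.2
  have hσ0 : ∀ i, i₀ < i → σ i = 0 := fun i hi => h.repM (hXcolM i hi) (hσS i) (hσM i)
  -- elementary correction
  set E : Matrix R R K := (fun i k => if k = i₀ ∧ i ≠ i₀ then X i j₀ - σ i else 0) with hEdef
  have hEe : ∀ i k, E i k = if k = i₀ ∧ i ≠ i₀ then X i j₀ - σ i else 0 := fun _ _ => rfl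
  have hEM : ∀ i k, E i k ∈ Mm := by
    intro i k
    rw [hEe]
    split
    · exact hσM i
    · exact h.Mzero
  have hEE : E * E = 0 := by
    ext i k
    rw [Matrix.mul_apply, Finset.sum_eq_zero, Matrix.zero_apply]
    intro l _
    by_cases hl : l = i₀
    · rw [hl, hEe i₀ k, if_neg (fun hc => hc.2 rfl), mul_zero]
    · rw [hEe i l, if_neg (fun hc => hl hc.1), zero_mul]
  set u₂ : Matrix R R K := 1 + E with hu₂def
  set u₂inv : Matrix R R K := 1 - E with hu₂invdef
  have hu₂U1 : U1G O Mm u₂ u₂inv := U1G.elem h hEM hEE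
  set Z : Matrix R C K := u₂inv * Y with hZdef
  have hZe : ∀ i j, Z i j
      = Y i j - (if i = i₀ then 0 else X i j₀ - σ i) * (if j = j₀ then 1 else 0) := by
    intro i j
    have hEY : (E * Y) i j
        = (if i = i₀ then 0 else X i j₀ - σ i) * (if j = j₀ then 1 else 0) := by
      rw [Matrix.mul_apply]
      rw [Finset.sum_eq_single i₀ (fun l _ hl => by
          rw [hEe, if_neg (fun hc => hl hc.1), zero_mul])
        (fun hc => absurd (Finset.mem_univ i₀) hc)]
      rw [hEe, hYrow j]
      by_cases hi : i = i₀
      · rw [if_neg (fun hc => hc.2 hi), if_pos hi, zero_mul]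
      · rw [if_pos ⟨rfl, hi⟩, if_neg hi]
    calc Z i j = Y i j - (E * Y) i j := by
          rw [hZdef, hu₂invdef, Matrix.sub_mul, Matrix.one_mul, Matrix.sub_apply]
      _ = _ := by rw [hEY]
  have hYZ : Y = u₂ * Z := by
    rw [hZdef, ← Matrix.mul_assoc, hu₂def, hu₂invdef]
    rw [show ((1 : Matrix R R K) + E) * (1 - E) = 1 - E * E from by noncomm_ring, hEE,
      sub_zero, Matrix.one_mul]
  -- the permutation
  have hwmk : ∃ w : C ≃ R, (∀ j, w j = if hj : j = j₀ then i₀ else (w' ⟨j, hj⟩).1)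
      ∧ (∀ i, w.symm i = if hi : i = i₀ then j₀ else (w'.symm ⟨i, hi⟩).1) := by
    refine ⟨⟨fun j => if hj : j = j₀ then i₀ else (w' ⟨j, hj⟩).1,
        fun i => if hi : i = i₀ then j₀ else (w'.symm ⟨i, hi⟩).1, ?_, ?_⟩,
      fun j => rfl, fun i => rfl⟩
    · intro j
      dsimp only
      by_cases hj : j = j₀
      · rw [dif_pos hj, dif_pos rfl, hj]
      · rw [dif_neg hj, dif_neg (w' ⟨j, hj⟩).2]
        have h2 : (⟨(w' ⟨j, hj⟩).1, (w' ⟨j, hj⟩).2⟩ : {x : R // x ≠ i₀}) = w' ⟨j, hj⟩ := rfl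
        rw [h2, Equiv.symm_apply_apply]
    · intro i
      dsimp only
      by_cases hi : i = i₀
      · rw [dif_pos hi, dif_pos rfl, hi]
      · rw [dif_neg hi, dif_neg (w'.symm ⟨i, hi⟩).2]
        have h2 : (⟨(w'.symm ⟨i, hi⟩).1, (w'.symm ⟨i, hi⟩).2⟩ : {y : C // y ≠ j₀})
          = w'.symm ⟨i, hi⟩ := rfl
        rw [h2, Equiv.apply_symm_apply]
  obtain ⟨w, hwap, hwsym⟩ := hwmk
  have hwj₀ : w j₀ = i₀ := by rw [hwap, dif_pos rfl]
  have hwne : ∀ j (hj : j ≠ j₀), w j = (w' ⟨j, hj⟩).1 := fun j hj => by rw [hwap, dif_neg hj]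
  have hwsymi₀ : w.symm i₀ = j₀ := by rw [hwsym, dif_pos rfl]
  have hwsymne : ∀ i (hi : i ≠ i₀), w.symm i = (w'.symm ⟨i, hi⟩).1 :=
    fun i hi => by rw [hwsym, dif_neg hi]
  -- the normal form matrix
  set N : Matrix R R K := (fun i k => if hk : k = i₀ then (if i = i₀ then 1 else σ i)
    else if hi : i = i₀ then 0 else N' ⟨i, hi⟩ ⟨k, hk⟩) with hNdef
  have hNe : ∀ i k, N i k = if hk : k = i₀ then (if i = i₀ then 1 else σ i)
      else if hi : i = i₀ then 0 else N' ⟨i, hi⟩ ⟨k, hk⟩ := fun _ _ => rfl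
  have hZN : Z = N * (pmat w : Matrix R C K) := by
    ext i j
    rw [mul_pmat]
    by_cases hj : j = j₀
    · rw [hj, hwj₀, hNe, dif_pos rfl, hZe, hYcol, if_pos rfl, mul_one]
      by_cases hi : i = i₀
      · rw [if_pos hi, if_pos hi, sub_zero, hi]
        have h1 := hXrow j₀
        rw [if_pos rfl] at h1
        rw [h1]
      · rw [if_neg hi, if_neg hi]
        ring
    · rw [hwne j hj, hNe, dif_neg (w' ⟨j, hj⟩).2, hZe, if_neg hj, mul_zero, sub_zero]
      by_cases hi : i = i₀
      · rw [dif_pos hi, hi, hYrow, if_neg hj]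
      · rw [dif_neg hi]
        have h1 := hYsub ⟨i, hi⟩ ⟨j, hj⟩
        rw [mul_pmat] at h1
        exact h1
  have hNF : NFG S w N := by
    refine ⟨?_, ?_, ?_, ?_⟩
    · intro i
      rw [hNe]
      by_cases hi : i = i₀
      · rw [dif_pos hi, if_pos hi]
      · rw [dif_neg hi, dif_neg hi]
        exact hNF'.1 _
    · intro i k hk
      rw [hNe]
      by_cases hki : k = i₀
      · rw [dif_pos hki]
        have hii : i ≠ i₀ := fun hc => hk.ne' (hc.trans hki.symm)
        rw [if_neg hii]
        exact hσ0 i (by rw [← hki]; exact hk)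
      · rw [dif_neg hki]
        by_cases hii : i = i₀
        · rw [dif_pos hii]
        · rw [dif_neg hii]
          exact hNF'.2.1 ⟨i, hii⟩ ⟨k, hki⟩ (Subtype.mk_lt_mk.2 hk)
    · intro i k hik hw
      rw [hNe]
      by_cases hki : k = i₀
      · exfalso
        rw [hki, hwsymi₀] at hw
        exact absurd hw (not_lt.2 (hj₀ _))
      · rw [dif_neg hki]
        by_cases hii : i = i₀
        · rw [dif_pos hii]
        · rw [dif_neg hii]
          apply hNF'.2.2.1 ⟨i, hii⟩ ⟨k, hki⟩ (Subtype.mk_lt_mk.2 hik)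
          rw [hwsymne i hii, hwsymne k hki] at hw
          exact Subtype.coe_lt_coe.1 hw
    · intro i k hik hw
      rw [hNe]
      by_cases hki : k = i₀
      · rw [dif_pos hki]
        by_cases hii : i = i₀
        · rw [if_pos hii]; exact h.S1
        · rw [if_neg hii]; exact hσS i
      · rw [dif_neg hki]
        by_cases hii : i = i₀
        · rw [dif_pos hii]; exact h.S0
        · rw [dif_neg hii]
          apply hNF'.2.2.2 ⟨i, hii⟩ ⟨k, hki⟩ (Subtype.mk_lt_mk.2 hik)
          rw [hwsymne i hii, hwsymne k hki] at hw
          exact Subtype.coe_lt_coe.1 hw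
  -- assemble U⁽¹⁾ element
  set u : Matrix R R K := U * u₂ with hudef
  set uinv : Matrix R R K := u₂inv * Uinv with huinvdef
  have hU1 : U1G O Mm u uinv := U1G.mul h (U1G.ext1 h i₀ hU1') hu₂U1
  -- assemble Borel element
  have hBorb₁inv : BorelG b₁inv := by
    constructor
    · intro j j' hj'
      have hjne : j ≠ j₀ := fun hc => absurd (hj₀ j') (not_le.2 (hc ▸ hj'))
      rw [hb₁inve, if_neg hjne, if_neg (ne_of_gt hj')]
    · intro j
      by_cases hj : j = j₀
      · have : b₁inv j j = g i₀ j := by rw [hb₁inve, if_pos hj]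
        rw [this, hj]
        exact hpv0
      · rw [hb₁inve, if_neg hj, if_pos rfl]
        exact one_ne_zero
  have hBorBe : BorelG Be := by
    constructor
    · intro j j' hj'
      have hjne : j ≠ j₀ := fun hc => absurd (hj₀ j') (not_le.2 (hc ▸ hj'))
      by_cases hj'0 : j' = j₀
      · rw [hj'0, hBedef, ext1_apply_col j₀ j₀ b' hjne]
      · rw [hBedef, ext1_apply j₀ j₀ b' hjne hj'0]
        exact hB'.1 _ _ (Subtype.mk_lt_mk.2 hj')
    · intro j
      by_cases hj : j = j₀
      · rw [hj, hBedef, ext1_apply_row, if_pos rfl]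
        exact one_ne_zero
      · rw [hBedef, ext1_apply j₀ j₀ b' hj hj]
        exact hB'.2 _
  set b : Matrix C C K := Be * b₁inv with hbdef
  set binv : Matrix C C K := b₁ * Beinv with hbinvdef
  have hBor : BorelG b := BorelG.mul hBorBe hBorb₁inv
  have hbb1 : b * binv = 1 := by
    rw [hbdef, hbinvdef]
    calc Be * b₁inv * (b₁ * Beinv) = Be * (b₁inv * b₁) * Beinv := by
          simp only [Matrix.mul_assoc]
      _ = 1 := by rw [hmul2, Matrix.mul_one, hBe1]
  have hbb2 : binv * b = 1 := by
    rw [hbinvdef, hbdef]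
    calc b₁ * Beinv * (Be * b₁inv) = b₁ * (Beinv * Be) * b₁inv := by
          simp only [Matrix.mul_assoc]
      _ = 1 := by rw [hBe2, Matrix.mul_one, hmul1]
  -- final equation
  refine ⟨w, N, u, uinv, b, binv, hNF, hU1, hBor, hbb1, hbb2, ?_⟩
  have e1 : g = gb * b₁inv := by
    rw [hgbdef]
    calc g = g * (b₁ * b₁inv) := by rw [hmul1, Matrix.mul_one]
      _ = g * b₁ * b₁inv := by rw [Matrix.mul_assoc]
  have e2 : gb = U * X := by
    rw [hXdef]
    calc gb = (U * Uinv) * gb := by rw [hUU, Matrix.one_mul]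
      _ = U * (Uinv * gb) := by rw [Matrix.mul_assoc]
  have e3 : X = Y * Be := by
    rw [hYdef]
    calc X = X * (Beinv * Be) := by rw [hBe2, Matrix.mul_one]
      _ = X * Beinv * Be := (Matrix.mul_assoc X Beinv Be).symm
  rw [e1, e2, e3, hYZ, hZN, hudef, hbdef]
  simp only [Matrix.mul_assoc]

lemma existsNF (h : Dat O Mm S) : ∀ (m : ℕ) (R C : Type) [Fintype R] [LinearOrder R]
    [Fintype C] [LinearOrder C] [DecidableEq R] [DecidableEq C],
    Fintype.card R = m → Fintype.card C = m →
    ∀ (g : Matrix R C K) (ginv : Matrix C R K), g * ginv = 1 → ginv * g = 1 → Conc O Mm S R C g := by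
  intro m
  induction m with
  | zero =>
    intro R C _ _ _ _ _ _ hcR hcC g ginv hgi hig
    haveI : IsEmpty R := Fintype.card_eq_zero_iff.1 hcR
    haveI : IsEmpty C := Fintype.card_eq_zero_iff.1 hcC
    have hsub : ∀ (X Y : Matrix R C K), X = Y := by
      intro X Y; ext i j; exact isEmptyElim i
    refine ⟨Equiv.equivOfIsEmpty C R, 1, 1, 1, 1, 1, ?_, ?_, ?_, ?_, ?_, ?_⟩
    · exact ⟨fun i => isEmptyElim i, fun i k _ => isEmptyElim i,
        fun i k _ _ => isEmptyElim i, fun i k _ _ => isEmptyElim i⟩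
    · exact ⟨fun i => isEmptyElim i, fun i => isEmptyElim i, by rw [Matrix.mul_one],
        by rw [Matrix.mul_one], fun i => isEmptyElim i, fun i => isEmptyElim i⟩
    · exact ⟨fun j => isEmptyElim j, fun j => isEmptyElim j⟩
    · rw [Matrix.mul_one]
    · rw [Matrix.mul_one]
    · exact hsub _ _
  | succ m ih =>
    intro R C _ _ _ _ _ _ hcR hcC g ginv hgi hig
    exact stepNF h R C hcR hcC (fun R' C' _ _ _ _ _ _ h1 h2 => ih R' C' h1 h2) g ginv hgi hig

end Exists
end Stmt9


/-- the matrices `ñ w` with `ñ ∈ Ñ_w(k_F)`, `w ∈ Sₙ`, form a set of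
double coset representatives for `U⁽¹⁾ \ GL_n(F) / B`.  Here `S ⊆ o_F` is the image
of the canonical multiplicative injection `k_F → o_F`: a multiplicative set of
representatives of the residue classes of `o_F`. -/
theorem stmt9 (n : ℕ) (π : F) (hπ : π ∈ oF p F)
    (hunif : ∀ x : F, x ≠ 0 →
      ∃ (m : ℤ) (u : F), u ∈ oF p F ∧ u⁻¹ ∈ oF p F ∧ x = u * π ^ m)
    (S : Set F) (hS0 : (0 : F) ∈ S) (hS1 : (1 : F) ∈ S) (hSsub : S ⊆ oF p F)
    (hSmul : ∀ a ∈ S, ∀ b ∈ S, a * b ∈ S)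
    (hSrep : ∀ x ∈ oF p F, ∃! s, s ∈ S ∧ x - s ∈ piO p F π)
    (g : GL (Fin n) F) :
    (∃ (w : Equiv.Perm (Fin n)) (nt : Matrix (Fin n) (Fin n) F),
      nt ∈ NwTilde F n S w ∧
      ∃ (u : GL (Fin n) F) (b : Matrix (Fin n) (Fin n) F), IsU1 p F π u ∧ IsBorel F b ∧
        (↑g : Matrix (Fin n) (Fin n) F) = (↑u : Matrix (Fin n) (Fin n) F) * (nt * permMat F n w) * b) ∧
    (∀ (w w' : Equiv.Perm (Fin n)) (nt nt' : Matrix (Fin n) (Fin n) F),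
      nt ∈ NwTilde F n S w → nt' ∈ NwTilde F n S w' →
      (∃ (u : GL (Fin n) F) (b : Matrix (Fin n) (Fin n) F), IsU1 p F π u ∧ IsBorel F b ∧
        (↑g : Matrix (Fin n) (Fin n) F) = (↑u : Matrix (Fin n) (Fin n) F) * (nt * permMat F n w) * b) →
      (∃ (u : GL (Fin n) F) (b : Matrix (Fin n) (Fin n) F), IsU1 p F π u ∧ IsBorel F b ∧
        (↑g : Matrix (Fin n) (Fin n) F) = (↑u : Matrix (Fin n) (Fin n) F) * (nt' * permMat F n w') * b) →
      w = w' ∧ nt = nt') := by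
  have hD : Stmt9.Dat (oF p F) (piO p F π) S :=
    Stmt9.mkDat p F π hπ hunif S hS0 hS1 hSsub hSrep
  constructor
  · -- existence
    have hgi : (↑g : Matrix (Fin n) (Fin n) F) * (↑g⁻¹ : Matrix (Fin n) (Fin n) F) = 1 :=
      g.mul_inv
    have hig : (↑g⁻¹ : Matrix (Fin n) (Fin n) F) * (↑g : Matrix (Fin n) (Fin n) F) = 1 :=
      g.inv_mul
    obtain ⟨w, N, u, uinv, b, binv, hNF, hU1, hBor, hb1, hb2, heq⟩ :=
      Stmt9.existsNF hD n (Fin n) (Fin n) (Fintype.card_fin n) (Fintype.card_fin n)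
        (↑g) (↑g⁻¹) hgi hig
    have hPw : permMat F n w = (Stmt9.pmat w : Matrix (Fin n) (Fin n) F) := by
      ext i j
      by_cases hc : w j = i <;> simp [permMat, Stmt9.pmat, hc]
    refine ⟨w, N, ⟨hNF.1, hNF.2.1, hNF.2.2.1, hNF.2.2.2⟩,
      ⟨u, uinv, hU1.mul_inv, hU1.inv_mul⟩, b,
      ⟨hU1.uO, hU1.uinvO, fun i j => ?_⟩, ⟨hBor.1, hBor.2⟩, ?_⟩
    · rw [Matrix.sub_apply]
      exact hU1.uM i j
    · rw [hPw]
      exact heq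
  · -- uniqueness
    intro w w' nt nt' hnt hnt' h1 h2
    obtain ⟨u₁, b₁, hU1, hB1, heq1⟩ := h1
    obtain ⟨u₂, b₂, hU2, hB2, heq2⟩ := h2
    obtain ⟨hd1, hl1, hz1, hs1⟩ := hnt
    obtain ⟨hd2, hl2, hz2, hs2⟩ := hnt'
    have hN1 : Stmt9.NFG S w nt := ⟨hd1, hl1, hz1, hs1⟩
    have hN2 : Stmt9.NFG S w' nt' := ⟨hd2, hl2, hz2, hs2⟩
    set U1 : Matrix (Fin n) (Fin n) F := (↑u₁ : Matrix (Fin n) (Fin n) F) with hU1def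
    set U1inv : Matrix (Fin n) (Fin n) F := (↑u₁⁻¹ : Matrix (Fin n) (Fin n) F) with hU1invdef
    set U2 : Matrix (Fin n) (Fin n) F := (↑u₂ : Matrix (Fin n) (Fin n) F) with hU2def
    set U2inv : Matrix (Fin n) (Fin n) F := (↑u₂⁻¹ : Matrix (Fin n) (Fin n) F) with hU2invdef
    have hu₁a : U1 * U1inv = 1 := u₁.mul_inv
    have hu₁b : U1inv * U1 = 1 := u₁.inv_mul
    have hu₂a : U2 * U2inv = 1 := u₂.mul_inv
    have hu₂b : U2inv * U2 = 1 := u₂.inv_mul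
    -- the subring O'
    set O' : Subring F := (integralClosure ℤ_[p] F).toSubring with hO'def
    have hmemO' : ∀ x : F, x ∈ oF p F → x ∈ O' := fun x hx => Subalgebra.mem_toSubring.2 hx
    have hmemO'' : ∀ x : F, x ∈ O' → x ∈ oF p F := fun x hx => Subalgebra.mem_toSubring.1 hx
    obtain ⟨nt2inv, hnt2a, hnt2b, hnt2O⟩ := Stmt9.unipotent_inv O' nt' hl2 hd2
      (fun i k => hmemO' _ (hN2.entries hD i k))
    -- triangular inverse of b₁
    have hBT1 : b₁.BlockTriangular id := fun i j hij => hB1.1 i j hij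
    have hdet1 : IsUnit b₁.det := by
      rw [Matrix.det_of_upperTriangular hBT1]
      exact isUnit_iff_ne_zero.2 (Finset.prod_ne_zero_iff.2 (fun i _ => hB1.2 i))
    have hb₁i : b₁ * b₁⁻¹ = 1 := Matrix.mul_nonsing_inv _ hdet1
    have hb₁i' : b₁⁻¹ * b₁ = 1 := Matrix.nonsing_inv_mul _ hdet1
    haveI : Invertible b₁ := b₁.invertibleOfIsUnitDet hdet1
    have hb₁T : Stmt9.Tri (b₁⁻¹) := by
      intro i j hij
      exact Matrix.blockTriangular_inv_of_blockTriangular hBT1 hij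
    -- rewrite permutation matrices
    have hP : permMat F n w = (Stmt9.pmat w : Matrix (Fin n) (Fin n) F) := by
      ext i j
      by_cases hc : w j = i <;> simp [permMat, Stmt9.pmat, hc]
    have hP' : permMat F n w' = (Stmt9.pmat w' : Matrix (Fin n) (Fin n) F) := by
      ext i j
      by_cases hc : w' j = i <;> simp [permMat, Stmt9.pmat, hc]
    rw [hP] at heq1
    rw [hP'] at heq2
    set P : Matrix (Fin n) (Fin n) F := Stmt9.pmat w with hPdef
    set P' : Matrix (Fin n) (Fin n) F := Stmt9.pmat w' with hP'def
    set bb : Matrix (Fin n) (Fin n) F := b₂ * b₁⁻¹ with hbbdef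
    have h0 : U1 * (nt * P) * b₁ = U2 * (nt' * P') * b₂ := by rw [← heq1, ← heq2]
    have hmain : nt * P = (U1inv * U2) * ((nt' * P') * bb) := by
      have e1 : U1inv * (U1 * (nt * P) * b₁) * b₁⁻¹ = nt * P := by
        calc U1inv * (U1 * (nt * P) * b₁) * b₁⁻¹
            = (U1inv * U1) * ((nt * P) * (b₁ * b₁⁻¹)) := by simp only [Matrix.mul_assoc]
          _ = nt * P := by rw [hu₁b, hb₁i, Matrix.one_mul, Matrix.mul_one]
      have e2 : U1inv * (U2 * (nt' * P') * b₂) * b₁⁻¹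
          = (U1inv * U2) * ((nt' * P') * bb) := by
        rw [hbbdef]
        simp only [Matrix.mul_assoc]
      rw [← e1, h0, e2]
    have hrev : (nt' * P') * bb = (U2inv * U1) * (nt * P) := by
      have e1 : U2inv * (U2 * (nt' * P') * b₂) * b₁⁻¹ = (nt' * P') * bb := by
        rw [hbbdef]
        calc U2inv * (U2 * (nt' * P') * b₂) * b₁⁻¹
            = (U2inv * U2) * ((nt' * P') * (b₂ * b₁⁻¹)) := by simp only [Matrix.mul_assoc]
          _ = (nt' * P') * (b₂ * b₁⁻¹) := by rw [hu₂b, Matrix.one_mul]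
      have e2 : U2inv * (U1 * (nt * P) * b₁) * b₁⁻¹ = (U2inv * U1) * (nt * P) := by
        calc U2inv * (U1 * (nt * P) * b₁) * b₁⁻¹
            = (U2inv * U1) * ((nt * P) * (b₁ * b₁⁻¹)) := by simp only [Matrix.mul_assoc]
          _ = (U2inv * U1) * (nt * P) := by rw [hb₁i, Matrix.mul_one]
      rw [← e1, ← h0, e2]
    -- entries-in-O helper
    have hOmul : ∀ (A B : Matrix (Fin n) (Fin n) F), (∀ i k, A i k ∈ oF p F) →
        (∀ i k, B i k ∈ oF p F) → ∀ i k, (A * B) i k ∈ oF p F := by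
      intro A B hA hB i k
      rw [Matrix.mul_apply]
      exact hD.OsumF _ _ (fun l _ => hD.Omul _ (hA i l) _ (hB l k))
    have hntPO : ∀ i k, (nt * P) i k ∈ oF p F := by
      intro i k
      rw [hPdef, Stmt9.mul_pmat]
      exact hN1.entries hD i (w k)
    have hQ2O : ∀ i k, (U2inv * U1) i k ∈ oF p F := hOmul _ _ hU2.2.1 hU1.1
    have hrbO : ∀ i k, ((nt' * P') * bb) i k ∈ oF p F := by
      intro i k
      rw [hrev]
      exact hOmul _ _ hQ2O hntPO i k
    -- bb has integral entries
    have hPT'O : ∀ j i, (Stmt9.pmatT w' : Matrix (Fin n) (Fin n) F) j i ∈ oF p F := by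
      intro j i
      by_cases hc : w' j = i
      · rw [show (Stmt9.pmatT w' : Matrix (Fin n) (Fin n) F) j i = 1 from by
          rw [Stmt9.pmatT, if_pos hc]]
        exact hD.Oone
      · rw [show (Stmt9.pmatT w' : Matrix (Fin n) (Fin n) F) j i = 0 from by
          rw [Stmt9.pmatT, if_neg hc]]
        exact hD.Ozero
    have hr2inv : ((Stmt9.pmatT w' : Matrix (Fin n) (Fin n) F) * nt2inv) * (nt' * P') = 1 := by
      calc ((Stmt9.pmatT w' : Matrix (Fin n) (Fin n) F) * nt2inv) * (nt' * P')
          = (Stmt9.pmatT w' : Matrix (Fin n) (Fin n) F) * ((nt2inv * nt') * P') := by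
            simp only [Matrix.mul_assoc]
        _ = 1 := by
            rw [hnt2b, Matrix.one_mul, hP'def, Stmt9.pmatT_mul_pmat]
    have hbbO : ∀ k j, bb k j ∈ oF p F := by
      have e2 : bb = ((Stmt9.pmatT w' : Matrix (Fin n) (Fin n) F) * nt2inv)
          * ((nt' * P') * bb) := by
        calc bb = (((Stmt9.pmatT w' : Matrix (Fin n) (Fin n) F) * nt2inv) * (nt' * P')) * bb := by
              rw [hr2inv, Matrix.one_mul]
          _ = _ := by simp only [Matrix.mul_assoc]
      intro k j
      rw [e2]
      exact hOmul _ _ (hOmul _ _ hPT'O (fun i k => hmemO'' _ (hnt2O i k))) hrbO k j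
    have hbbT : Stmt9.Tri bb := Stmt9.Tri.mul (fun i j hij => hB2.1 i j hij) hb₁T
    -- the congruence
    have hQM : ∀ i k, (U1inv * U2) i k - (1 : Matrix (Fin n) (Fin n) F) i k ∈ piO p F π := by
      have hQ1 : U1inv * U2 - 1 = U1inv * (U2 - U1) := by
        rw [Matrix.mul_sub, hu₁b]
      intro i k
      rw [show (U1inv * U2) i k - (1 : Matrix (Fin n) (Fin n) F) i k
        = (U1inv * U2 - 1) i k from by rw [Matrix.sub_apply], hQ1, Matrix.mul_apply]
      apply hD.MsumF
      intro l _
      refine hD.OmulM (hU1.2.1 i l) ?_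
      have e3 : (U2 - U1) l k = ((↑u₂ : Matrix (Fin n) (Fin n) F) - 1) l k
          - ((↑u₁ : Matrix (Fin n) (Fin n) F) - 1) l k := by
        simp only [Matrix.sub_apply]
        ring
      rw [e3]
      exact hD.Msub (hU2.2.2 l k) (hU1.2.2 l k)
    have hcongM : ∀ i j, (nt * P) i j - ((nt' * P') * bb) i j ∈ piO p F π := by
      have hQe : nt * P - (nt' * P') * bb = (U1inv * U2 - 1) * ((nt' * P') * bb) := by
        rw [hmain]
        noncomm_ring
      intro i j
      rw [show (nt * P) i j - ((nt' * P') * bb) i j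
        = (nt * P - (nt' * P') * bb) i j from by rw [Matrix.sub_apply], hQe, Matrix.mul_apply]
      apply hD.MsumF
      intro l _
      refine hD.MmulO _ ?_ _ (hrbO l j)
      rw [show (U1inv * U2 - 1) i l = (U1inv * U2) i l - (1 : Matrix (Fin n) (Fin n) F) i l
        from by rw [Matrix.sub_apply]]
      exact hQM i l
    have hcong : ∀ i j, nt i (w j) - ∑ k, nt' i (w' k) * bb k j ∈ piO p F π := by
      intro i j
      have h3 := hcongM i j
      rw [hPdef, Stmt9.mul_pmat, Matrix.mul_apply] at h3
      simp only [hP'def, Stmt9.mul_pmat] at h3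
      exact h3
    have hall := Stmt9.coreUnique hD hN1 hN2 hbbT hbbO hcong
    have hww : w = w' := Equiv.ext (fun j => (hall j).1)
    refine ⟨hww, ?_⟩
    ext i k
    have h4 := (hall (w.symm k)).2 i
    rw [Equiv.apply_symm_apply, ← hww, Equiv.apply_symm_apply] at h4
    exact hD.Suniq _ (hN1.entries_S hS0 hS1 i k) _ (hN2.entries_S hS0 hS1 i k) h4
end
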